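/- arXiv:1207.0468 — 7 statements merged into one kernel-verified Lean document; each statement's English description precedes it below -/
import Mathlib

section
/- Let σ be a symmetric invertible real 3×3 matrix and let R, S be real 3×3 matrices such that for every h ∈ ℝ³ one has E(S·h)·σ⁻¹ + σ·E(R·h) = 0. Then S = −adj(σ)·R, where adj(σ) is the adjugate of σ (equal to the cofactor matrix of σ, since σ is symmetric), and moreover E(R·h) = −σ⁻¹·E(S·h)·σ⁻¹ for every h ∈ ℝ³. -/
open Matrix

/-- The antisymmetric matrix of the cross product: `crossMat η *ᵥ w = η ×₃ w`. -/
noncomputable def crossMat (η : Fin 3 → ℝ) : Matrix (Fin 3) (Fin 3) ℝ :=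
  !![0, -η 2, η 1; η 2, 0, -η 0; -η 1, η 0, 0]

lemma crossMat_inj {v w : Fin 3 → ℝ} (h : crossMat v = crossMat w) : v = w := by
  funext i
  fin_cases i
  · simpa [crossMat] using congrFun (congrFun h 2) 1
  · simpa [crossMat] using congrFun (congrFun h 0) 2
  · simpa [crossMat] using congrFun (congrFun h 1) 0

lemma crossMat_smul (c : ℝ) (v : Fin 3 → ℝ) : crossMat (c • v) = c • crossMat v := by
  ext i j
  fin_cases i <;> fin_cases j <;> simp [crossMat]

lemma key (A : Matrix (Fin 3) (Fin 3) ℝ) (w : Fin 3 → ℝ) :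
    Aᵀ * crossMat (A *ᵥ w) * A = A.det • crossMat w := by
  ext i j
  fin_cases i <;> fin_cases j <;>
    simp [crossMat, Matrix.mul_apply, Matrix.mulVec, Matrix.det_fin_three,
      Fin.sum_univ_succ, dotProduct] <;> ring

lemma crossMat_eq_iff {v w : Fin 3 → ℝ} : crossMat v = crossMat w ↔ v = w :=
  ⟨crossMat_inj, fun h => h ▸ rfl⟩

/-- If `σ` is a symmetric invertible real 3×3 matrix and `R`, `S` satisfy
`E(S h) σ⁻¹ + σ E(R h) = 0` for all `h`, then `S = −adj(σ) R` and
`E(R h) = −σ⁻¹ E(S h) σ⁻¹` for every `h`. -/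
theorem hallMatrix_eq_neg_adjugate_mul (σ R S : Matrix (Fin 3) (Fin 3) ℝ)
    (hσsymm : σ.IsSymm) (hσinv : IsUnit σ.det)
    (hfirst : ∀ h : Fin 3 → ℝ,
      crossMat (S.mulVec h) * σ⁻¹ + σ * crossMat (R.mulVec h) = 0) :
    S = -(σ.adjugate * R) ∧
      ∀ h : Fin 3 → ℝ,
        crossMat (R.mulVec h) = -(σ⁻¹ * crossMat (S.mulVec h) * σ⁻¹) := by
  have hσi : σ⁻¹ * σ = 1 := nonsing_inv_mul σ hσinv
  have hσi' : σ * σ⁻¹ = 1 := mul_nonsing_inv σ hσinv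
  have hadj : σ.adjugate = σ.det • σ⁻¹ := by
    rw [inv_def, smul_smul, Ring.mul_inverse_cancel _ hσinv, one_smul]
  have hS : ∀ h : Fin 3 → ℝ, crossMat (S *ᵥ h) = -(σ * crossMat (R *ᵥ h) * σ) := by
    intro h
    have h1 : crossMat (S *ᵥ h) * σ⁻¹ = -(σ * crossMat (R *ᵥ h)) :=
      eq_neg_of_add_eq_zero_left (hfirst h)
    calc crossMat (S *ᵥ h) = crossMat (S *ᵥ h) * σ⁻¹ * σ := by
          rw [mul_assoc, hσi, mul_one]
      _ = -(σ * crossMat (R *ᵥ h) * σ) := by rw [h1, neg_mul]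
  constructor
  · have hmv : ∀ h : Fin 3 → ℝ, S *ᵥ h = (-(σ.adjugate * R)) *ᵥ h := by
      intro h
      apply crossMat_inj
      have hw : σ *ᵥ (σ⁻¹ *ᵥ (R *ᵥ h)) = R *ᵥ h := by
        rw [mulVec_mulVec, hσi', one_mulVec]
      have hk := key σ (σ⁻¹ *ᵥ (R *ᵥ h))
      rw [hw, hσsymm.eq] at hk
      have : (-(σ.adjugate * R)) *ᵥ h = -(σ.det • (σ⁻¹ *ᵥ (R *ᵥ h))) := by
        rw [hadj, neg_mulVec, Matrix.smul_mul, smul_mulVec, mulVec_mulVec]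
      rw [hS h, hk, this, ← neg_smul, ← neg_smul, crossMat_smul]
    ext i j
    simpa using congrFun (hmv (Pi.single j 1)) i
  · intro h
    have h1 : σ * crossMat (R *ᵥ h) = -(crossMat (S *ᵥ h) * σ⁻¹) :=
      eq_neg_of_add_eq_zero_right (hfirst h)
    calc crossMat (R *ᵥ h) = σ⁻¹ * (σ * crossMat (R *ᵥ h)) := by
          rw [← mul_assoc, hσi, one_mul]
      _ = -(σ⁻¹ * crossMat (S *ᵥ h) * σ⁻¹) := by
          rw [h1, mul_neg, mul_assoc]
end

section
/- Let θ ∈ (0,1), α₂ > 0 and t ∈ ℝ. Set σ₁ := θ⁻¹·(I₃ + E(t·e₃)) and σ₂ := α₂·I₃ + E(t·e₃), and let D := 1 − θ + θ²α₂. Then there exists a unique pair of vectors μ₁, μ₂ ∈ ℝ³ such that, setting Pᵢ := I₃ + e₁·μᵢᵀ (i = 1,2), one has θ·P₁ + (1−θ)·P₂ = I₃ and e₁ᵀ·σ₁·P₁ = e₁ᵀ·σ₂·P₂. This pair is given explicitly by P₁ = I₃ + ((1−θ)/D)·B and P₂ = I₃ − (θ/D)·B, where B is the 3×3 matrix whose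 first row is (θα₂ − 1, (1−θ)t, 0) and whose other entries vanish. Moreover the effective conductivity σ_* := θ·σ₁·P₁ + (1−θ)·σ₂·P₂ equals the matrix with entries σ_*[1,1] = α₂/D, σ_*[1,2] = −(1−θ+θα₂)·t/D, σ_*[2,1] = (1−θ+θα₂)·t/D, σ_*[2,2] = 1 + (1−θ)α₂ + (1−θ)³t²/D, σ_*[3,3] = 1 + (1−θ)α₂, and all other entries zero. -/
open Matrix

/-!
With `Pᵢ = 1 + e μᵢᵀ`, the average condition says `θ μ₁ + (1 - θ) μ₂ = 0` (as `e ≠ 0`) and the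
flux condition says `eᵀσ₁ + (eᵀσ₁e) μ₁ = eᵀσ₂ + (eᵀσ₂e) μ₂`. This is a 2 × 2 linear system for
`(μ₁, μ₂)` with vector right-hand side and determinant `d = (1 - θ) eᵀσ₁e + θ eᵀσ₂e`, so its unique
solution is `μ₁ = ((1 - θ) / d) (eᵀσ₂ - eᵀσ₁)`, `μ₂ = -(θ / d) (eᵀσ₂ - eᵀσ₁)`. For the two given
phases `d = D / θ > 0` and `eᵀσ₂ - eᵀσ₁ = θ⁻¹ (θα₂ - 1, (1 - θ) t, 0)`; the effective conductivity
is then a direct matrix computation.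
-/

section Corrector

variable {K n : Type*} [Field K] [DecidableEq n]

theorem smul_one_add_vecMulVec_add_sub_smul (θ : K) (e μ₁ μ₂ : n → K) :
    θ • (1 + vecMulVec e μ₁) + (1 - θ) • (1 + vecMulVec e μ₂) =
      1 + vecMulVec e (θ • μ₁ + (1 - θ) • μ₂) := by
  rw [vecMulVec_add, vecMulVec_smul, vecMulVec_smul]
  module

theorem smul_one_add_vecMulVec_add_sub_smul_eq_one_iff {e : n → K} (he : e ≠ 0) (θ : K)
    (μ₁ μ₂ : n → K) :
    θ • (1 + vecMulVec e μ₁) + (1 - θ) • (1 + vecMulVec e μ₂) = 1 ↔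
      θ • μ₁ + (1 - θ) • μ₂ = 0 := by
  rw [smul_one_add_vecMulVec_add_sub_smul, add_eq_left, vecMulVec_eq_zero, or_iff_right he]

theorem vecMul_mul_one_add_vecMulVec [Fintype n] (σ : Matrix n n K) (e μ : n → K) :
    e ᵥ* (σ * (1 + vecMulVec e μ)) = e ᵥ* σ + (e ᵥ* σ ⬝ᵥ e) • μ := by
  rw [mul_add, mul_one, vecMul_add, mul_vecMulVec, vecMul_vecMulVec, dotProduct_mulVec]

theorem smul_add_sub_smul_eq_zero_and_add_smul_eq_add_smul_iff {V : Type*} [AddCommGroup V]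
    [Module K V] {θ a₁ a₂ : K} (hd : (1 - θ) * a₁ + θ * a₂ ≠ 0) (r₁ r₂ μ₁ μ₂ : V) :
    (θ • μ₁ + (1 - θ) • μ₂ = 0 ∧ r₁ + a₁ • μ₁ = r₂ + a₂ • μ₂) ↔
      μ₁ = ((1 - θ) / ((1 - θ) * a₁ + θ * a₂)) • (r₂ - r₁) ∧
        μ₂ = -(θ / ((1 - θ) * a₁ + θ * a₂)) • (r₂ - r₁) := by
  set d := (1 - θ) * a₁ + θ * a₂
  constructor
  · rintro ⟨havg, hflux⟩
    have h₁ : d • μ₁ = (1 - θ) • (r₂ - r₁) := by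
      linear_combination (norm := module) a₂ • havg + (1 - θ) • hflux
    have h₂ : d • μ₂ = -θ • (r₂ - r₁) := by
      linear_combination (norm := module) a₁ • havg - θ • hflux
    constructor
    · rw [← inv_smul_smul₀ hd μ₁, h₁]
      module
    · rw [← inv_smul_smul₀ hd μ₂, h₂]
      module
  · rintro ⟨rfl, rfl⟩
    constructor
    · match_scalars <;> ring
    · match_scalars <;> field_simp <;> ring

theorem laminate_corrector_iff [Fintype n] {e : n → K} (he : e ≠ 0) {θ : K}
    {σ₁ σ₂ : Matrix n n K} (hd : (1 - θ) * (e ᵥ* σ₁ ⬝ᵥ e) + θ * (e ᵥ* σ₂ ⬝ᵥ e) ≠ 0)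
    (μ₁ μ₂ : n → K) :
    (θ • (1 + vecMulVec e μ₁) + (1 - θ) • (1 + vecMulVec e μ₂) = 1 ∧
        e ᵥ* (σ₁ * (1 + vecMulVec e μ₁)) = e ᵥ* (σ₂ * (1 + vecMulVec e μ₂))) ↔
      μ₁ = ((1 - θ) / ((1 - θ) * (e ᵥ* σ₁ ⬝ᵥ e) + θ * (e ᵥ* σ₂ ⬝ᵥ e))) •
          (e ᵥ* σ₂ - e ᵥ* σ₁) ∧
        μ₂ = -(θ / ((1 - θ) * (e ᵥ* σ₁ ⬝ᵥ e) + θ * (e ᵥ* σ₂ ⬝ᵥ e))) • (e ᵥ* σ₂ - e ᵥ* σ₁) := by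
  rw [smul_one_add_vecMulVec_add_sub_smul_eq_one_iff he, vecMul_mul_one_add_vecMulVec,
    vecMul_mul_one_add_vecMulVec, smul_add_sub_smul_eq_zero_and_add_smul_eq_add_smul_iff hd]

end Corrector

theorem smul_one_add_crossMat_smul_e3 (a t : ℝ) :
    a • (1 : Matrix (Fin 3) (Fin 3) ℝ) + crossMat (t • ![0, 0, 1]) =
      !![a, -t, 0; t, a, 0; 0, 0, a] := by
  ext i j
  fin_cases i <;> fin_cases j <;> simp [crossMat]

theorem one_add_crossMat_smul_e3 (t : ℝ) :
    1 + crossMat (t • ![0, 0, 1]) = !![1, -t, 0; t, 1, 0; 0, 0, 1] := by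
  rw [← smul_one_add_crossMat_smul_e3, one_smul]

theorem vecMulVec_e1 (x y z : ℝ) :
    vecMulVec ![1, 0, 0] ![x, y, z] = !![x, y, z; 0, 0, 0; 0, 0, 0] := by
  ext i j
  fin_cases i <;> fin_cases j <;> simp [-cons_vecMulVec]

section RankOneLaminate

variable {θ α₂ t : ℝ}

theorem rankOneLaminate_corrector_iff (hθ : θ ≠ 0) (hD : 1 - θ + θ ^ 2 * α₂ ≠ 0)
    (μ₁ μ₂ : Fin 3 → ℝ) :
    let e1 : Fin 3 → ℝ := ![1, 0, 0]
    let σ1 : Matrix (Fin 3) (Fin 3) ℝ := θ⁻¹ • !![1, -t, 0; t, 1, 0; 0, 0, 1]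
    let σ2 : Matrix (Fin 3) (Fin 3) ℝ := !![α₂, -t, 0; t, α₂, 0; 0, 0, α₂]
    let D : ℝ := 1 - θ + θ ^ 2 * α₂
    (θ • (1 + vecMulVec e1 μ₁) + (1 - θ) • (1 + vecMulVec e1 μ₂) = 1 ∧
        e1 ᵥ* (σ1 * (1 + vecMulVec e1 μ₁)) = e1 ᵥ* (σ2 * (1 + vecMulVec e1 μ₂))) ↔
      μ₁ = ((1 - θ) / D) • ![θ * α₂ - 1, (1 - θ) * t, 0] ∧
        μ₂ = -(θ / D) • ![θ * α₂ - 1, (1 - θ) * t, 0] := by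
  intro e1 σ1 σ2 D
  have he1 : e1 ≠ 0 := fun h => by simpa [e1] using congrFun h 0
  have hd : (1 - θ) * (e1 ᵥ* σ1 ⬝ᵥ e1) + θ * (e1 ᵥ* σ2 ⬝ᵥ e1) = D / θ := by
    simp [σ1, σ2, e1, D]
    field_simp
  have hjump : e1 ᵥ* σ2 - e1 ᵥ* σ1 = θ⁻¹ • ![θ * α₂ - 1, (1 - θ) * t, 0] := by
    ext j
    fin_cases j <;> simp [e1, σ1, σ2] <;> grind
  have hμ1 : (1 - θ) / (D / θ) * θ⁻¹ = (1 - θ) / D := by field_simp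
  have hμ2 : -(θ / (D / θ)) * θ⁻¹ = -(θ / D) := by field_simp
  rw [laminate_corrector_iff he1 (by rw [hd]; exact div_ne_zero hD hθ), hd, hjump, smul_smul,
    smul_smul, hμ1, hμ2]

theorem rankOneLaminate_effective_eq (hθ : θ ≠ 0) (hD : 1 - θ + θ ^ 2 * α₂ ≠ 0) :
    let D : ℝ := 1 - θ + θ ^ 2 * α₂
    let B : Matrix (Fin 3) (Fin 3) ℝ := !![θ * α₂ - 1, (1 - θ) * t, 0; 0, 0, 0; 0, 0, 0]
    θ • (θ⁻¹ • !![1, -t, 0; t, 1, 0; 0, 0, 1] * (1 + ((1 - θ) / D) • B)) +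
        (1 - θ) • (!![α₂, -t, 0; t, α₂, 0; 0, 0, α₂] * (1 - (θ / D) • B)) =
      !![α₂ / D, -((1 - θ + θ * α₂) * t) / D, 0;
         ((1 - θ + θ * α₂) * t) / D, 1 + (1 - θ) * α₂ + (1 - θ) ^ 3 * t ^ 2 / D, 0;
         0, 0, 1 + (1 - θ) * α₂] := by
  intro D B
  rw [one_fin_three]
  simp only [B, smul_of, of_add_of, of_sub_of, smul_cons, smul_empty, cons_add_cons,
    cons_sub_cons, empty_add_empty, empty_sub_empty, mul_fin_three]
  ext i j
  fin_cases i <;> fin_cases j <;> simp [D] <;> field_simp <;> ring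

end RankOneLaminate

/-- Corrector and effective conductivity of the rank-one laminate mixing
`σ₁ = θ⁻¹ (I₃ + E(t e₃))` and `σ₂ = α₂ I₃ + E(t e₃)` in proportions `θ`, `1−θ`
in the direction `e₁`: there is a unique pair of vectors `μ₁, μ₂` such that the
matrices `Pᵢ = I₃ + e₁ μᵢᵀ` have average `I₃` and matching normal fluxes
`e₁ᵀ σ₁ P₁ = e₁ᵀ σ₂ P₂`; this pair is given by `P₁ = I₃ + ((1−θ)/D) B`,
`P₂ = I₃ − (θ/D) B`, and the effective conductivity
`σ_* = θ σ₁ P₁ + (1−θ) σ₂ P₂` has the announced explicit form. -/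
theorem rankOneLaminate_corrector_and_effective (θ α₂ t : ℝ)
    (hθ : θ ∈ Set.Ioo (0 : ℝ) 1) (hα₂ : 0 < α₂) :
    let e1 : Fin 3 → ℝ := ![1, 0, 0]
    let e3 : Fin 3 → ℝ := ![0, 0, 1]
    let σ1 : Matrix (Fin 3) (Fin 3) ℝ := θ⁻¹ • (1 + crossMat (t • e3))
    let σ2 : Matrix (Fin 3) (Fin 3) ℝ :=
      α₂ • (1 : Matrix (Fin 3) (Fin 3) ℝ) + crossMat (t • e3)
    let D : ℝ := 1 - θ + θ ^ 2 * α₂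
    let B : Matrix (Fin 3) (Fin 3) ℝ := !![θ * α₂ - 1, (1 - θ) * t, 0; 0, 0, 0; 0, 0, 0]
    let Pmat : (Fin 3 → ℝ) → Matrix (Fin 3) (Fin 3) ℝ := fun μ => 1 + vecMulVec e1 μ
    let Cond : (Fin 3 → ℝ) × (Fin 3 → ℝ) → Prop := fun μ =>
      θ • Pmat μ.1 + (1 - θ) • Pmat μ.2 = 1 ∧
        Matrix.vecMul e1 (σ1 * Pmat μ.1) = Matrix.vecMul e1 (σ2 * Pmat μ.2)
    let μ1 : Fin 3 → ℝ := ((1 - θ) / D) • ![θ * α₂ - 1, (1 - θ) * t, 0]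
    let μ2 : Fin 3 → ℝ := -(θ / D) • ![θ * α₂ - 1, (1 - θ) * t, 0]
    (∃! μ : (Fin 3 → ℝ) × (Fin 3 → ℝ), Cond μ) ∧
      Cond (μ1, μ2) ∧
      Pmat μ1 = 1 + ((1 - θ) / D) • B ∧
      Pmat μ2 = 1 - (θ / D) • B ∧
      θ • (σ1 * Pmat μ1) + (1 - θ) • (σ2 * Pmat μ2) =
        !![α₂ / D, -((1 - θ + θ * α₂) * t) / D, 0;
           ((1 - θ + θ * α₂) * t) / D, 1 + (1 - θ) * α₂ + (1 - θ) ^ 3 * t ^ 2 / D, 0;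
           0, 0, 1 + (1 - θ) * α₂] := by
  intro e1 e3 σ1 σ2 D B Pmat Cond μ1 μ2
  obtain ⟨hθ₀, hθ₁⟩ := hθ
  have hD : 0 < D := by positivity
  have hσ1 : σ1 = θ⁻¹ • !![1, -t, 0; t, 1, 0; 0, 0, 1] := by
    rw [← one_add_crossMat_smul_e3]
  have hσ2 : σ2 = !![α₂, -t, 0; t, α₂, 0; 0, 0, α₂] := smul_one_add_crossMat_smul_e3 α₂ t
  have hCond : ∀ μ, Cond μ ↔ μ = (μ1, μ2) := by
    rintro ⟨ν₁, ν₂⟩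
    simp only [Cond, Pmat, hσ1, hσ2, Prod.mk.injEq]
    exact rankOneLaminate_corrector_iff hθ₀.ne' hD.ne' ν₁ ν₂
  have hP1 : Pmat μ1 = 1 + ((1 - θ) / D) • B := by
    simp only [Pmat, e1, μ1, vecMulVec_smul, vecMulVec_e1, B]
  have hP2 : Pmat μ2 = 1 - (θ / D) • B := by
    simp only [Pmat, e1, μ2, neg_smul, vecMulVec_neg, vecMulVec_smul, vecMulVec_e1, B,
      sub_eq_add_neg]
  refine ⟨⟨_, (hCond _).2 rfl, fun μ => (hCond μ).1⟩, (hCond _).2 rfl, hP1, hP2, ?_⟩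
  rw [hP1, hP2, hσ1, hσ2]
  exact rankOneLaminate_effective_eq hθ₀.ne' hD.ne'
end

section
/- For every even integer p ≥ 2 there exist θ ∈ (0,1) and α₂ > 0 such that (1−θ+θα₂)²·(1−θ+α₂)^{p−1} / (α₂^{p−1}·(1+(1−θ)α₂)^{p}) − (1−θ)/α₂^{2p−1} − (θα₂)² > 0 and (1−θ+α₂)^{p} / (α₂^{p}·(1+(1−θ)α₂)^{p−1}) − 1 − (1−θ)/α₂^{2p−1} < 0. -/
/-!
At `θ = 0` the laminate degenerates and both entries have closed forms: with `p = q + 1`,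
`𝒟₁₁ = 1 / (α^q (1 + α)) - 1 / α^(2q+1)` and `𝒟₂₂ = (1 + α) / α^p - 1 - 1 / α^(2p-1)`.
Both have the required strict sign as soon as `1 + α < α^p`, e.g. for `α = 2` and `p ≥ 2`.
Both entries are continuous in `θ` at `0`, so the strict signs persist for small `θ > 0`.
-/

open Filter Topology Set

/-- The `(1,1)` entry of `𝒟^{(2p)}`, without its positive factor. -/
noncomputable def diffEntry₁₁ (p : ℕ) (θ α : ℝ) : ℝ :=
  (1 - θ + θ * α) ^ 2 * (1 - θ + α) ^ (p - 1) / (α ^ (p - 1) * (1 + (1 - θ) * α) ^ p)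
    - (1 - θ) / α ^ (2 * p - 1) - (θ * α) ^ 2

/-- The `(2,2)` entry of `𝒟^{(2p)}`, without its positive factor. -/
noncomputable def diffEntry₂₂ (p : ℕ) (θ α : ℝ) : ℝ :=
  (1 - θ + α) ^ p / (α ^ p * (1 + (1 - θ) * α) ^ (p - 1)) - 1 - (1 - θ) / α ^ (2 * p - 1)

section

variable {p : ℕ} {α : ℝ}

theorem continuousAt_diffEntry₁₁ {θ₀ : ℝ} (hα : α ≠ 0) (hθ₀ : 1 + (1 - θ₀) * α ≠ 0) :
    ContinuousAt (fun θ ↦ diffEntry₁₁ p θ α) θ₀ := by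
  unfold diffEntry₁₁
  fun_prop (disch := simp [hα, hθ₀])

theorem continuousAt_diffEntry₂₂ {θ₀ : ℝ} (hα : α ≠ 0) (hθ₀ : 1 + (1 - θ₀) * α ≠ 0) :
    ContinuousAt (fun θ ↦ diffEntry₂₂ p θ α) θ₀ := by
  unfold diffEntry₂₂
  fun_prop (disch := simp [hα, hθ₀])

theorem diffEntry₁₁_zero_pos (hp : 1 ≤ p) (hα : 0 < α) (hαp : 1 + α < α ^ p) :
    0 < diffEntry₁₁ p 0 α := by
  obtain ⟨q, rfl⟩ : ∃ q, p = q + 1 := ⟨p - 1, by omega⟩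
  have hαq : 0 < α ^ q := pow_pos hα q
  have key : diffEntry₁₁ (q + 1) 0 α = 1 / (α ^ q * (1 + α)) - 1 / (α ^ q * α ^ (q + 1)) := by
    simp only [diffEntry₁₁, Nat.add_sub_cancel, show 2 * (q + 1) - 1 = q + (q + 1) by omega]
    field_simp
    ring
  rw [key, sub_pos]
  exact one_div_lt_one_div_of_lt (by positivity) (mul_lt_mul_of_pos_left hαp hαq)

theorem diffEntry₂₂_zero_neg (hp : 1 ≤ p) (hα : 0 < α) (hαp : 1 + α < α ^ p) :
    diffEntry₂₂ p 0 α < 0 := by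
  obtain ⟨q, rfl⟩ : ∃ q, p = q + 1 := ⟨p - 1, by omega⟩
  have key : diffEntry₂₂ (q + 1) 0 α = (1 + α) / α ^ (q + 1) - 1 - 1 / α ^ (2 * (q + 1) - 1) := by
    simp only [diffEntry₂₂, Nat.add_sub_cancel]
    field_simp
    ring
  have hratio : (1 + α) / α ^ (q + 1) < 1 := (div_lt_one (by positivity)).2 hαp
  have hrem : 0 < 1 / α ^ (2 * (q + 1) - 1) := by positivity
  linarith

theorem exists_diffEntry₁₁_pos_diffEntry₂₂_neg (hp : 1 ≤ p) (hα : 0 < α)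
    (hαp : 1 + α < α ^ p) :
    ∃ θ ∈ Ioo (0 : ℝ) 1, 0 < diffEntry₁₁ p θ α ∧ diffEntry₂₂ p θ α < 0 := by
  have hθ₀ : 1 + (1 - 0) * α ≠ 0 := by positivity
  have h₁₁ : ∀ᶠ θ in 𝓝 0, 0 < diffEntry₁₁ p θ α :=
    continuousAt_const.eventually_lt (continuousAt_diffEntry₁₁ hα.ne' hθ₀)
      (diffEntry₁₁_zero_pos hp hα hαp)
  have h₂₂ : ∀ᶠ θ in 𝓝 0, diffEntry₂₂ p θ α < 0 :=
    (continuousAt_diffEntry₂₂ hα.ne' hθ₀).eventually_lt continuousAt_const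
      (diffEntry₂₂_zero_neg hp hα hαp)
  have hIoo : ∀ᶠ θ in 𝓝[>] 0, θ ∈ Ioo (0 : ℝ) 1 := Ioo_mem_nhdsGT one_pos
  exact (hIoo.and (nhdsWithin_le_nhds (h₁₁.and h₂₂))).exists

end

theorem higherOrder_difference_changes_sign_general (p : ℕ) (hp : 2 ≤ p) :
    ∃ θ α₂ : ℝ, θ ∈ Set.Ioo (0 : ℝ) 1 ∧ 0 < α₂ ∧
      0 < (1 - θ + θ * α₂) ^ 2 * (1 - θ + α₂) ^ (p - 1) /
            (α₂ ^ (p - 1) * (1 + (1 - θ) * α₂) ^ p)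
          - (1 - θ) / α₂ ^ (2 * p - 1) - (θ * α₂) ^ 2 ∧
      (1 - θ + α₂) ^ p / (α₂ ^ p * (1 + (1 - θ) * α₂) ^ (p - 1))
          - 1 - (1 - θ) / α₂ ^ (2 * p - 1) < 0 := by
  have h2p : (1 : ℝ) + 2 < 2 ^ p :=
    calc (1 : ℝ) + 2 < 2 ^ 2 := by norm_num
      _ ≤ 2 ^ p := pow_le_pow_right₀ one_le_two hp
  obtain ⟨θ, hθ, h₁₁, h₂₂⟩ := exists_diffEntry₁₁_pos_diffEntry₂₂_neg (by omega) two_pos h2p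
  exact ⟨θ, 2, hθ, two_pos, h₁₁, h₂₂⟩

/-- For every even integer `p ≥ 2` there exist `θ ∈ (0,1)` and `α₂ > 0` making the
`(1,1)` entry of the difference matrix `𝒟^{(2p)}` positive and its `(2,2)` entry
negative. -/
theorem higherOrder_difference_changes_sign (p : ℕ) (hp : 2 ≤ p) (hpe : Even p) :
    ∃ θ α₂ : ℝ, θ ∈ Set.Ioo (0 : ℝ) 1 ∧ 0 < α₂ ∧
      0 < (1 - θ + θ * α₂) ^ 2 * (1 - θ + α₂) ^ (p - 1) /
            (α₂ ^ (p - 1) * (1 + (1 - θ) * α₂) ^ p)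
          - (1 - θ) / α₂ ^ (2 * p - 1) - (θ * α₂) ^ 2 ∧
      (1 - θ + α₂) ^ p / (α₂ ^ p * (1 + (1 - θ) * α₂) ^ (p - 1))
          - 1 - (1 - θ) / α₂ ^ (2 * p - 1) < 0 :=
  higherOrder_difference_changes_sign_general p hp
end

section
/- Let 0 < α ≤ β, let a : (0,1) → [α,β] be measurable, and let r ∈ L^∞(0,1). Define d₁ := ⟨a⁻¹⟩⁻²·[⟨a·r²⟩ − ⟨a⟩⁻¹·⟨a·r⟩²], d₂ := ⟨a³·r²⟩ − ⟨a⟩⁻¹·⟨a²·r⟩², and d₃ := ⟨a⁻¹⟩⁻¹·[⟨a²·r²⟩ − ⟨a⟩⁻¹·⟨a·r⟩·⟨a²·r⟩]. Then for all real numbers u and v, the symmetric 3×3 matrix [[d₁·v², d₃·u·v, 0], [d₃·u·v, d₂·u², 0], [0, 0, d₂·u²]] is positive semidefinite. -/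
open MeasureTheory

/-- Average over the unit interval `(0,1)`. -/
noncomputable def avg01 (f : ℝ → ℝ) : ℝ := ∫ y in Set.Ioo (0 : ℝ) 1, f y

/-- `d₁ = ⟨a⁻¹⟩⁻²[⟨a r²⟩ − ⟨a⟩⁻¹⟨a r⟩²]`. -/
noncomputable def dOne (a r : ℝ → ℝ) : ℝ :=
  ((avg01 fun y => (a y)⁻¹) ^ 2)⁻¹ *
    ((avg01 fun y => a y * r y ^ 2) - (avg01 a)⁻¹ * (avg01 fun y => a y * r y) ^ 2)

/-- `d₂ = ⟨a³ r²⟩ − ⟨a⟩⁻¹⟨a² r⟩²`. -/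
noncomputable def dTwo (a r : ℝ → ℝ) : ℝ :=
  (avg01 fun y => a y ^ 3 * r y ^ 2) - (avg01 a)⁻¹ * (avg01 fun y => a y ^ 2 * r y) ^ 2

/-- `d₃ = ⟨a⁻¹⟩⁻¹[⟨a² r²⟩ − ⟨a⟩⁻¹⟨a r⟩⟨a² r⟩]`. -/
noncomputable def dThree (a r : ℝ → ℝ) : ℝ :=
  (avg01 fun y => (a y)⁻¹)⁻¹ *
    ((avg01 fun y => a y ^ 2 * r y ^ 2) -
      (avg01 a)⁻¹ * (avg01 fun y => a y * r y) * (avg01 fun y => a y ^ 2 * r y))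

/-!
With weight `a ≥ 0` and `h = (s + t a) r`, the weighted variance `⟨a h²⟩ − ⟨a⟩⁻¹⟨a h⟩²` is
nonnegative by Cauchy–Schwarz (the quadratic `c ↦ ⟨a (h − c)²⟩` has nonpositive discriminant),
and expanding it in `s, t` gives the quadratic form `P(s,t)` whose coefficients are the brackets
in `d₁, d₃, d₂`. The matrix's quadratic form at `x` is `P(⟨a⁻¹⟩⁻¹ v x₀, u x₁) + d₂ (u x₂)²`,
and `d₂ = P(0, 1) ≥ 0`.
-/

namespace MeasureTheory

variable {X : Type*} [MeasurableSpace X] {μ : Measure X}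

theorem sq_integral_mul_le_integral_mul_integral_mul_sq {w h : X → ℝ} (hw : 0 ≤ᵐ[μ] w)
    (hw_int : Integrable w μ) (hwh : Integrable (fun x => w x * h x) μ)
    (hwh2 : Integrable (fun x => w x * h x ^ 2) μ) :
    (∫ x, w x * h x ∂μ) ^ 2 ≤ (∫ x, w x ∂μ) * ∫ x, w x * h x ^ 2 ∂μ := by
  have hquad : ∀ c : ℝ, 0 ≤ (∫ x, w x ∂μ) * (c * c) + (-2 * ∫ x, w x * h x ∂μ) * c
      + ∫ x, w x * h x ^ 2 ∂μ := fun c =>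
    calc 0 ≤ ∫ x, w x * (h x - c) ^ 2 ∂μ :=
          integral_nonneg_of_ae (hw.mono fun x hx => mul_nonneg hx (sq_nonneg _))
      _ = ∫ x, w x * h x ^ 2 + (-2 * c) * (w x * h x) + c ^ 2 * w x ∂μ := by
          congr 1; funext x; ring
      _ = _ := by
          rw [integral_add (by fun_prop) (by fun_prop), integral_add hwh2 (by fun_prop),
            integral_const_mul, integral_const_mul]
          ring
  have := discrim_le_zero hquad
  rw [discrim] at this
  linarith

theorem inv_integral_mul_sq_integral_mul_le {w h : X → ℝ} (hw : 0 ≤ᵐ[μ] w)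
    (hw_int : Integrable w μ) (hwh : Integrable (fun x => w x * h x) μ)
    (hwh2 : Integrable (fun x => w x * h x ^ 2) μ) :
    (∫ x, w x ∂μ)⁻¹ * (∫ x, w x * h x ∂μ) ^ 2 ≤ ∫ x, w x * h x ^ 2 ∂μ := by
  rcases (integral_nonneg_of_ae hw).eq_or_lt with hzero | hpos
  · rw [← hzero, inv_zero, zero_mul]
    exact integral_nonneg_of_ae (hw.mono fun x hx => mul_nonneg hx (sq_nonneg _))
  · rw [inv_mul_le_iff₀ hpos]
    exact sq_integral_mul_le_integral_mul_integral_mul_sq hw hw_int hwh hwh2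

theorem MemLp.pow {f : X → ℝ} (hf : MemLp f ⊤ μ) (n : ℕ) :
    MemLp (fun x => f x ^ n) ⊤ μ := by
  induction n with
  | zero => simpa using memLp_top_const (μ := μ) (1 : ℝ)
  | succ n ih => simpa only [pow_succ] using hf.mul' ih

theorem layered_quadratic_form_nonneg [IsFiniteMeasure μ] {a r : X → ℝ} (ha : MemLp a ⊤ μ)
    (hr : MemLp r ⊤ μ) (ha0 : 0 ≤ᵐ[μ] a) (s t : ℝ) :
    0 ≤ ((∫ x, a x * r x ^ 2 ∂μ) - (∫ x, a x ∂μ)⁻¹ * (∫ x, a x * r x ∂μ) ^ 2) * s ^ 2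
      + 2 * ((∫ x, a x ^ 2 * r x ^ 2 ∂μ) -
          (∫ x, a x ∂μ)⁻¹ * (∫ x, a x * r x ∂μ) * (∫ x, a x ^ 2 * r x ∂μ)) * s * t
      + ((∫ x, a x ^ 3 * r x ^ 2 ∂μ) - (∫ x, a x ∂μ)⁻¹ * (∫ x, a x ^ 2 * r x ∂μ) ^ 2) * t ^ 2 := by
  have hI : ∀ k m : ℕ, Integrable (fun x => a x ^ k * r x ^ m) μ := fun k m =>
    ((hr.pow m).mul' (ha.pow k)).integrable le_top
  have I_a : Integrable a μ := ha.integrable le_top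
  have I_ar : Integrable (fun x => a x * r x) μ := by simpa using hI 1 1
  have I_a2r : Integrable (fun x => a x ^ 2 * r x) μ := by simpa using hI 2 1
  have I_ar2 : Integrable (fun x => a x * r x ^ 2) μ := by simpa using hI 1 2
  have I_a2r2 := hI 2 2
  have I_a3r2 := hI 3 2
  set h : X → ℝ := fun x => (s + t * a x) * r x
  have ah_eq : (fun x => a x * h x) = fun x => s * (a x * r x) + t * (a x ^ 2 * r x) := by
    funext x; ring
  have ah2_eq : (fun x => a x * h x ^ 2) = fun x => s ^ 2 * (a x * r x ^ 2)
      + 2 * s * t * (a x ^ 2 * r x ^ 2) + t ^ 2 * (a x ^ 3 * r x ^ 2) := by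
    funext x; ring
  have I_ah : Integrable (fun x => a x * h x) μ := by rw [ah_eq]; fun_prop
  have I_ah2 : Integrable (fun x => a x * h x ^ 2) μ := by rw [ah2_eq]; fun_prop
  have first_moment : ∫ x, a x * h x ∂μ = s * ∫ x, a x * r x ∂μ + t * ∫ x, a x ^ 2 * r x ∂μ := by
    rw [ah_eq, integral_add (by fun_prop) (by fun_prop), integral_const_mul, integral_const_mul]
  have second_moment : ∫ x, a x * h x ^ 2 ∂μ = s ^ 2 * ∫ x, a x * r x ^ 2 ∂μ
      + 2 * s * t * ∫ x, a x ^ 2 * r x ^ 2 ∂μ + t ^ 2 * ∫ x, a x ^ 3 * r x ^ 2 ∂μ := by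
    rw [ah2_eq, integral_add (by fun_prop) (by fun_prop), integral_add (by fun_prop) (by fun_prop),
      integral_const_mul, integral_const_mul, integral_const_mul]
  have := inv_integral_mul_sq_integral_mul_le ha0 I_a I_ah I_ah2
  rw [first_moment, second_moment] at this
  linear_combination this

end MeasureTheory

namespace Matrix

theorem posSemidef_of_forall_quadratic_nonneg {d₁ d₂ d₃ : ℝ}
    (hd : ∀ x y : ℝ, 0 ≤ d₁ * x ^ 2 + 2 * d₃ * x * y + d₂ * y ^ 2) (u v : ℝ) :
    (!![d₁ * v ^ 2, d₃ * u * v, 0;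
        d₃ * u * v, d₂ * u ^ 2, 0;
        0, 0, d₂ * u ^ 2] : Matrix (Fin 3) (Fin 3) ℝ).PosSemidef := by
  refine .of_dotProduct_mulVec_nonneg ?_ fun x => ?_
  · ext i j
    fin_cases i <;> fin_cases j <;> simp
  · have hform : star x ⬝ᵥ (!![d₁ * v ^ 2, d₃ * u * v, 0; d₃ * u * v, d₂ * u ^ 2, 0;
          0, 0, d₂ * u ^ 2] *ᵥ x) = (d₁ * (v * x 0) ^ 2 + 2 * d₃ * (v * x 0) * (u * x 1)
          + d₂ * (u * x 1) ^ 2) + d₂ * (u * x 2) ^ 2 := by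
      simp only [dotProduct, Pi.star_apply, star_trivial, mulVec, of_apply, cons_val',
        cons_val_fin_one, Fin.sum_univ_three, cons_val_zero, cons_val_one, cons_val, zero_mul,
        add_zero, zero_add]
      ring
    have hd₂ : 0 ≤ d₂ := by simpa using hd 0 1
    rw [hform]
    exact add_nonneg (hd _ _) (by positivity)

end Matrix

theorem layered_difference_posSemidef_general (α β : ℝ) (hα : 0 < α)
    (a r : ℝ → ℝ) (ha : Measurable a) (hr : Measurable r)
    (haI : ∀ y ∈ Set.Ioo (0 : ℝ) 1, a y ∈ Set.Icc α β)
    (hrB : ∃ C : ℝ, ∀ᵐ y ∂(volume.restrict (Set.Ioo (0 : ℝ) 1)), |r y| ≤ C)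
    (u v : ℝ) :
    (!![dOne a r * v ^ 2, dThree a r * u * v, 0;
        dThree a r * u * v, dTwo a r * u ^ 2, 0;
        0, 0, dTwo a r * u ^ 2] : Matrix (Fin 3) (Fin 3) ℝ).PosSemidef := by
  set μ := volume.restrict (Set.Ioo (0 : ℝ) 1)
  obtain ⟨C, hC⟩ := hrB
  have ha_mem : ∀ᵐ y ∂μ, a y ∈ Set.Icc α β := (ae_restrict_mem measurableSet_Ioo).mono haI
  have ha0 : 0 ≤ᵐ[μ] a := ha_mem.mono fun y hy => hα.le.trans hy.1
  have ha_top : MemLp a ⊤ μ := memLp_top_of_bound ha.aestronglyMeasurable β <|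
    ha_mem.mono fun y hy => abs_le.2 ⟨by linarith [hy.1, hy.2], hy.2⟩
  have hr_top : MemLp r ⊤ μ := memLp_top_of_bound hr.aestronglyMeasurable C hC
  refine Matrix.posSemidef_of_forall_quadratic_nonneg (fun x y => ?_) u v
  have := layered_quadratic_form_nonneg ha_top hr_top ha0 ((avg01 fun y => (a y)⁻¹)⁻¹ * x) y
  simp only [dOne, dTwo, dThree, avg01] at this ⊢
  linear_combination this

/-- The magneto-resistance dissipation difference matrix of a layered composite,
`[[d₁v², d₃uv, 0], [d₃uv, d₂u², 0], [0, 0, d₂u²]]`, is positive semidefinite. -/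
theorem layered_difference_posSemidef (α β : ℝ) (hα : 0 < α) (hαβ : α ≤ β)
    (a r : ℝ → ℝ) (ha : Measurable a) (hr : Measurable r)
    (haI : ∀ y ∈ Set.Ioo (0 : ℝ) 1, a y ∈ Set.Icc α β)
    (hrB : ∃ C : ℝ, ∀ᵐ y ∂(volume.restrict (Set.Ioo (0 : ℝ) 1)), |r y| ≤ C)
    (u v : ℝ) :
    (!![dOne a r * v ^ 2, dThree a r * u * v, 0;
        dThree a r * u * v, dTwo a r * u ^ 2, 0;
        0, 0, dTwo a r * u ^ 2] : Matrix (Fin 3) (Fin 3) ℝ).PosSemidef :=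
  layered_difference_posSemidef_general α β hα a r ha hr haI hrB u v
end

section
/- Let 0 < α ≤ β, let a : (0,1) → [α,β] be measurable, and let r ∈ L^∞(0,1). Define d₁ := ⟨a⁻¹⟩⁻²·[⟨a·r²⟩ − ⟨a⟩⁻¹·⟨a·r⟩²], d₂ := ⟨a³·r²⟩ − ⟨a⟩⁻¹·⟨a²·r⟩², and d₃ := ⟨a⁻¹⟩⁻¹·[⟨a²·r²⟩ − ⟨a⟩⁻¹·⟨a·r⟩·⟨a²·r⟩]. For real numbers u, v, the matrix [[d₁·v², d₃·u·v, 0], [d₃·u·v, d₂·u², 0], [0, 0, d₂·u²]] is the zero matrix if and only if one of the following holds: (i) u = v = 0; (ii) u = 0, v ≠ 0 and r is constant almost everywhere; (iii) u ≠ 0, v = 0 and a·r is constant almost everywhere; (iv) u ≠ 0, v ≠ 0 and both r and a·r are constant almost everywhere. -/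
open MeasureTheory

/-!
Each bracket in `d₁`, `d₂`, `d₃` is an `a`-weighted covariance `⟨a f g⟩ − ⟨a⟩⁻¹⟨a f⟩⟨a g⟩`,
for `(f, g) = (r, r)`, `(a r, a r)` and `(r, a r)` respectively. A weighted variance is
`⟨a (g − m)²⟩` with `m = ⟨a g⟩ / ⟨a⟩`, so, as `a ≥ α > 0`, it vanishes iff `g` is a.e. constant,
and a covariance vanishes as soon as one argument is a.e. constant. Hence `d₁ = 0` iff `r` is
constant, `d₂ = 0` iff `a r` is constant, and `d₂ = 0` forces `d₃ = 0`; the four cases follow by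
splitting on whether `u` and `v` vanish.
-/

section WeightedCovariance

variable {X : Type*} [MeasurableSpace X] {μ : Measure X} {w f g : X → ℝ}

noncomputable def weightedCov (μ : Measure X) (w f g : X → ℝ) : ℝ :=
  ∫ x, w x * f x * g x ∂μ - (∫ x, w x ∂μ)⁻¹ * (∫ x, w x * f x ∂μ) * ∫ x, w x * g x ∂μ

noncomputable def weightedMean (μ : Measure X) (w g : X → ℝ) : ℝ :=
  (∫ x, w x * g x ∂μ) / ∫ x, w x ∂μ

theorem integral_pos_of_ae_pos [NeZero μ] (hf : ∀ᵐ x ∂μ, 0 < f x) (hfi : Integrable f μ) :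
    0 < ∫ x, f x ∂μ := by
  have hf0 : 0 ≤ᵐ[μ] f := hf.mono fun _ hx => hx.le
  refine (integral_nonneg_of_ae hf0).lt_of_ne' fun h => NeZero.ne μ ?_
  have hfalse : ∀ᵐ x ∂μ, False := by
    filter_upwards [hf, (integral_eq_zero_iff_of_nonneg_ae hf0 hfi).1 h] with x hpos hzero
    exact hpos.ne' hzero
  exact ae_eq_bot.1 (Filter.eventually_false_iff_eq_bot.1 hfalse)

theorem weightedCov_eq_zero_of_ae_eq_const {c : ℝ} (hw0 : ∫ x, w x ∂μ ≠ 0)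
    (hg : ∀ᵐ x ∂μ, g x = c) : weightedCov μ w f g = 0 := by
  have hwfg : ∫ x, w x * f x * g x ∂μ = c * ∫ x, w x * f x ∂μ := by
    rw [← integral_const_mul]
    exact integral_congr_ae (hg.mono fun x hx => by simp only [hx]; ring)
  have hwg : ∫ x, w x * g x ∂μ = c * ∫ x, w x ∂μ := by
    rw [← integral_const_mul]
    exact integral_congr_ae (hg.mono fun x hx => by simp only [hx]; ring)
  rw [weightedCov, hwfg, hwg]
  field_simp
  ring

theorem weightedCov_self_eq_integral (hw0 : ∫ x, w x ∂μ ≠ 0) (hwi : Integrable w μ)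
    (hwg : Integrable (fun x => w x * g x) μ) (hwgg : Integrable (fun x => w x * g x * g x) μ) :
    weightedCov μ w g g =
      ∫ x, w x * (g x - weightedMean μ w g) * (g x - weightedMean μ w g) ∂μ := by
  set m := weightedMean μ w g
  have hexpand : (fun x => w x * (g x - m) * (g x - m)) =
      fun x => w x * g x * g x - 2 * m * (w x * g x) + m ^ 2 * w x := by
    ext x; ring
  rw [hexpand, integral_add, integral_sub, integral_const_mul, integral_const_mul, weightedCov]
  · simp only [m, weightedMean]
    field_simp
    ring
  exacts [hwgg, hwg.const_mul _, hwgg.sub (hwg.const_mul _), hwi.const_mul _]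

theorem weightedCov_self_eq_zero_iff {C : ℝ} (hw : ∀ᵐ x ∂μ, 0 < w x) (hwi : Integrable w μ)
    (hw0 : ∫ x, w x ∂μ ≠ 0) (hg : AEStronglyMeasurable g μ) (hgC : ∀ᵐ x ∂μ, ‖g x‖ ≤ C) :
    weightedCov μ w g g = 0 ↔ ∃ c, ∀ᵐ x ∂μ, g x = c := by
  refine ⟨fun h => ?_, fun ⟨c, hc⟩ => weightedCov_eq_zero_of_ae_eq_const hw0 hc⟩
  set m := weightedMean μ w g
  have hgm : AEStronglyMeasurable (fun x => g x - m) μ := hg.sub aestronglyMeasurable_const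
  have hgmC : ∀ᵐ x ∂μ, ‖g x - m‖ ≤ C + ‖m‖ :=
    hgC.mono fun x hx => (norm_sub_le _ _).trans (by gcongr)
  have hint : Integrable (fun x => w x * (g x - m) * (g x - m)) μ :=
    (hwi.mul_bdd hgm hgmC).mul_bdd hgm hgmC
  have hnn : 0 ≤ᵐ[μ] fun x => w x * (g x - m) * (g x - m) :=
    hw.mono fun x hx => by
      simp only [Pi.zero_apply, mul_assoc]
      exact mul_nonneg hx.le (mul_self_nonneg _)
  rw [weightedCov_self_eq_integral hw0 hwi (hwi.mul_bdd hg hgC)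
    ((hwi.mul_bdd hg hgC).mul_bdd hg hgC)] at h
  refine ⟨m, ?_⟩
  filter_upwards [(integral_eq_zero_iff_of_nonneg_ae hnn hint).1 h, hw] with x hx hpos
  simpa [hpos.ne', sub_eq_zero] using hx

end WeightedCovariance

theorem dOne_eq_weightedCov (a r : ℝ → ℝ) :
    dOne a r = ((avg01 fun y => (a y)⁻¹) ^ 2)⁻¹ *
      weightedCov (volume.restrict (Set.Ioo 0 1)) a r r := by
  simp only [dOne, weightedCov, avg01]; ring_nf

theorem dTwo_eq_weightedCov (a r : ℝ → ℝ) :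
    dTwo a r =
      weightedCov (volume.restrict (Set.Ioo 0 1)) a (fun y => a y * r y) (fun y => a y * r y) := by
  simp only [dTwo, weightedCov, avg01]; ring_nf

theorem dThree_eq_weightedCov (a r : ℝ → ℝ) :
    dThree a r = (avg01 fun y => (a y)⁻¹)⁻¹ *
      weightedCov (volume.restrict (Set.Ioo 0 1)) a r (fun y => a y * r y) := by
  simp only [dThree, weightedCov, avg01]; ring_nf

theorem layered_difference_eq_zero_iff_general (α β : ℝ) (hα : 0 < α)
    (a r : ℝ → ℝ) (ha : Measurable a) (hr : Measurable r)
    (haI : ∀ y ∈ Set.Ioo (0 : ℝ) 1, a y ∈ Set.Icc α β)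
    (hrB : ∃ C : ℝ, ∀ᵐ y ∂(volume.restrict (Set.Ioo (0 : ℝ) 1)), |r y| ≤ C)
    (u v : ℝ) :
    (!![dOne a r * v ^ 2, dThree a r * u * v, 0;
        dThree a r * u * v, dTwo a r * u ^ 2, 0;
        0, 0, dTwo a r * u ^ 2] : Matrix (Fin 3) (Fin 3) ℝ) = 0 ↔
      (u = 0 ∧ v = 0) ∨
      (u = 0 ∧ v ≠ 0 ∧ ∃ c : ℝ, ∀ᵐ y ∂(volume.restrict (Set.Ioo (0 : ℝ) 1)), r y = c) ∨
      (u ≠ 0 ∧ v = 0 ∧ ∃ c : ℝ, ∀ᵐ y ∂(volume.restrict (Set.Ioo (0 : ℝ) 1)), a y * r y = c) ∨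
      (u ≠ 0 ∧ v ≠ 0 ∧
        (∃ c : ℝ, ∀ᵐ y ∂(volume.restrict (Set.Ioo (0 : ℝ) 1)), r y = c) ∧
        (∃ c : ℝ, ∀ᵐ y ∂(volume.restrict (Set.Ioo (0 : ℝ) 1)), a y * r y = c)) := by
  set μ := volume.restrict (Set.Ioo (0 : ℝ) 1)
  have : IsProbabilityMeasure μ := ⟨by simp [μ]⟩
  obtain ⟨C, hC⟩ := hrB
  have haαβ : ∀ᵐ y ∂μ, a y ∈ Set.Icc α β := ae_restrict_of_forall_mem measurableSet_Ioo haI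
  have ha_pos : ∀ᵐ y ∂μ, 0 < a y := haαβ.mono fun y hy => hα.trans_le hy.1
  have ha_int : Integrable a μ := .of_mem_Icc α β ha.aemeasurable haαβ
  have ha_inv_int : Integrable (fun y => (a y)⁻¹) μ :=
    .of_mem_Icc β⁻¹ α⁻¹ ha.inv.aemeasurable <| haαβ.mono fun y hy =>
      ⟨inv_anti₀ (hα.trans_le hy.1) hy.2, inv_anti₀ hα hy.1⟩
  have hA : avg01 a ≠ 0 := (integral_pos_of_ae_pos ha_pos ha_int).ne'
  have hA_inv : avg01 (fun y => (a y)⁻¹) ≠ 0 :=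
    (integral_pos_of_ae_pos (ha_pos.mono fun y hy => inv_pos.2 hy) ha_inv_int).ne'
  have har_bound : ∀ᵐ y ∂μ, ‖a y * r y‖ ≤ β * C := by
    filter_upwards [haαβ, hC] with y hy hry
    rw [norm_mul, Real.norm_of_nonneg (hα.le.trans hy.1)]
    exact mul_le_mul hy.2 hry (norm_nonneg _) (hα.le.trans (hy.1.trans hy.2))
  have hd₁ : dOne a r = 0 ↔ ∃ c, ∀ᵐ y ∂μ, r y = c := by
    rw [dOne_eq_weightedCov, mul_eq_zero, or_iff_right (by simpa using hA_inv),
      weightedCov_self_eq_zero_iff ha_pos ha_int hA hr.aestronglyMeasurable hC]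
  have hd₂ : dTwo a r = 0 ↔ ∃ c, ∀ᵐ y ∂μ, a y * r y = c := by
    rw [dTwo_eq_weightedCov]
    exact weightedCov_self_eq_zero_iff ha_pos ha_int hA (ha.mul hr).aestronglyMeasurable har_bound
  have hd₃ : (∃ c, ∀ᵐ y ∂μ, a y * r y = c) → dThree a r = 0 := fun ⟨c, hc⟩ => by
    rw [dThree_eq_weightedCov, weightedCov_eq_zero_of_ae_eq_const hA hc, mul_zero]
  rcases eq_or_ne u 0 with hu | hu <;> rcases eq_or_ne v 0 with hv | hv <;>
    simp [← Matrix.ext_iff, Fin.forall_fin_succ, hu, hv, hd₁, hd₂]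
  exact ⟨fun h => ⟨h.1.1, h.2.2⟩, fun h => ⟨⟨h.1, hd₃ h.2⟩, hd₃ h.2, h.2⟩⟩

/-- Characterization of the vanishing of the magneto-resistance dissipation
difference matrix of a layered composite, according to the orientation of the
magnetic field (`u = h·ξ`, `v = |h×ξ|`). -/
theorem layered_difference_eq_zero_iff (α β : ℝ) (hα : 0 < α) (hαβ : α ≤ β)
    (a r : ℝ → ℝ) (ha : Measurable a) (hr : Measurable r)
    (haI : ∀ y ∈ Set.Ioo (0 : ℝ) 1, a y ∈ Set.Icc α β)
    (hrB : ∃ C : ℝ, ∀ᵐ y ∂(volume.restrict (Set.Ioo (0 : ℝ) 1)), |r y| ≤ C)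
    (u v : ℝ) :
    (!![dOne a r * v ^ 2, dThree a r * u * v, 0;
        dThree a r * u * v, dTwo a r * u ^ 2, 0;
        0, 0, dTwo a r * u ^ 2] : Matrix (Fin 3) (Fin 3) ℝ) = 0 ↔
      (u = 0 ∧ v = 0) ∨
      (u = 0 ∧ v ≠ 0 ∧ ∃ c : ℝ, ∀ᵐ y ∂(volume.restrict (Set.Ioo (0 : ℝ) 1)), r y = c) ∨
      (u ≠ 0 ∧ v = 0 ∧ ∃ c : ℝ, ∀ᵐ y ∂(volume.restrict (Set.Ioo (0 : ℝ) 1)), a y * r y = c) ∨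
      (u ≠ 0 ∧ v ≠ 0 ∧
        (∃ c : ℝ, ∀ᵐ y ∂(volume.restrict (Set.Ioo (0 : ℝ) 1)), r y = c) ∧
        (∃ c : ℝ, ∀ᵐ y ∂(volume.restrict (Set.Ioo (0 : ℝ) 1)), a y * r y = c)) :=
  layered_difference_eq_zero_iff_general α β hα a r ha hr haI hrB u v
end

section
/- Let α₁, α₂, α₃, α₄ > 0 and let σ : (−1/2,1/2)² → ℝ be the four-phase checkerboard conductivity: σ = α₁ on Q₁ = (0,1/2)², σ = α₂ on Q₂ = (0,1/2)×(−1/2,0), σ = α₃ on Q₃ = (−1/2,0)², and σ = α₄ on Q₄ = (−1/2,0)×(0,1/2). Let h₁, h₂ ∈ ℝ with h₁ ≠ 0 and h₂ ≠ 0. If there exist measurable functions f, g : ℝ → ℝ such that σ(y₁,y₂) = f(h₁y₁ + h₂y₂)·g(h₁y₂ − h₂y₁) for almost every (y₁,y₂) ∈ (−1/2,1/2)², then α₁ = α₂ = α₃ = α₄, i.e. σ is constant almost everywhere. -/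
/-!
In the coordinates `z = (h₁y₁ + h₂y₂, h₁y₂ - h₂y₁)` the hypothesis says that the checkerboard is
a.e. a tensor product `f z₁ * g z₂`. If it is locally constant, with values `c₀₀, c₀₁, c₁₀, c₁₁`,
near the four corners of a rectangle with sides parallel to the `z`-axes, then choosing generic
abscissae `x, x'` and ordinates `y, y'` near the corners (Fubini) gives `c₀₀ c₁₁ = c₁₀ c₀₁`.
As `h₁, h₂ ≠ 0`, the sides of such a rectangle are transversal to both `y`-axes, so a small one
can be placed across an axis with three corners in one quadrant and the fourth in a neighbouring
one. This gives `α α' = α α` for neighbouring phases `α, α'`, hence `α' = α` when `α ≠ 0`; three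
such pairs link all four phases.
-/

open MeasureTheory

/-- The four-phase checkerboard conductivity on the plane: value `α₁` on the
open quadrant `y₁ > 0, y₂ > 0`, `α₂` on `y₁ > 0, y₂ < 0`, `α₃` on
`y₁ < 0, y₂ < 0` and `α₄` on `y₁ < 0, y₂ > 0`. -/
noncomputable def checkerboard (α₁ α₂ α₃ α₄ : ℝ) (y : ℝ × ℝ) : ℝ :=
  if 0 < y.1 then (if 0 < y.2 then α₁ else α₂) else (if 0 < y.2 then α₄ else α₃)

open Filter Topology

section LocalProduct

variable {α β : Type*} [TopologicalSpace α] [MeasurableSpace α] [TopologicalSpace β]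
  [MeasurableSpace β] {μ : Measure α} {ν : Measure β}

instance nhds_inf_ae_neBot [μ.IsOpenPosMeasure] (a : α) : (𝓝 a ⊓ ae μ).NeBot :=
  inf_neBot_iff_frequently_left.2 fun hs =>
    frequently_ae_iff.2 (Measure.measure_pos_of_mem_nhds μ hs).ne'

theorem Filter.Eventually.curry_nhds_inf_ae [SFinite ν] {p : α × β → Prop} {z : α × β}
    (h : ∀ᶠ x in 𝓝 z ⊓ ae (μ.prod ν), p x) :
    ∀ᶠ x in 𝓝 z.1 ⊓ ae μ, ∀ᶠ y in 𝓝 z.2 ⊓ ae ν, p (x, y) := by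
  obtain ⟨s, hs, t, ht, hst⟩ := eventually_inf.1 h
  rw [nhds_prod_eq] at hs
  obtain ⟨U, hU, V, hV, hUV⟩ := mem_prod_iff.1 hs
  filter_upwards [mem_inf_of_left hU, mem_inf_of_right (Measure.ae_ae_of_ae_prod ht)]
    with x hx hxt
  filter_upwards [mem_inf_of_left hV, mem_inf_of_right hxt] with y hy hyt
  exact hst _ ⟨hUV ⟨hx, hy⟩, hyt⟩

theorem mul_mul_eq_of_eventually_nhds_inf_ae {M : Type*} [CommMonoid M] [μ.IsOpenPosMeasure]
    [ν.IsOpenPosMeasure] [SFinite ν] {f : α → M} {g : β → M} {a a' : α} {b b' : β}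
    {c₀₀ c₀₁ c₁₀ c₁₁ : M}
    (h₀₀ : ∀ᶠ z in 𝓝 (a, b) ⊓ ae (μ.prod ν), f z.1 * g z.2 = c₀₀)
    (h₀₁ : ∀ᶠ z in 𝓝 (a, b') ⊓ ae (μ.prod ν), f z.1 * g z.2 = c₀₁)
    (h₁₀ : ∀ᶠ z in 𝓝 (a', b) ⊓ ae (μ.prod ν), f z.1 * g z.2 = c₁₀)
    (h₁₁ : ∀ᶠ z in 𝓝 (a', b') ⊓ ae (μ.prod ν), f z.1 * g z.2 = c₁₁) :
    c₀₀ * c₁₁ = c₁₀ * c₀₁ := by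
  obtain ⟨x, hx₀, hx₁⟩ := (h₀₀.curry_nhds_inf_ae.and h₀₁.curry_nhds_inf_ae).exists
  obtain ⟨x', hx'₀, hx'₁⟩ := (h₁₀.curry_nhds_inf_ae.and h₁₁.curry_nhds_inf_ae).exists
  obtain ⟨y, hy, hy'⟩ := (hx₀.and hx'₀).exists
  obtain ⟨y', hy'₀, hy'₁⟩ := (hx₁.and hx'₁).exists
  calc c₀₀ * c₁₁ = f x * g y * (f x' * g y') := by rw [hy, hy'₁]
    _ = f x' * g y * (f x * g y') := by ac_rfl
    _ = c₁₀ * c₀₁ := by rw [hy', hy'₀]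

end LocalProduct

section LinearChange

variable {E : Type*} [NormedAddCommGroup E] [NormedSpace ℝ E] [MeasurableSpace E] [BorelSpace E]
  [FiniteDimensional ℝ E] {μ : Measure E} [μ.IsAddHaarMeasure]

theorem ContinuousLinearMap.eventually_nhds_inf_ae_of_comp (L : E →L[ℝ] E) (hL : L.det ≠ 0)
    {p : E → Prop} {x : E} (h : ∀ᶠ y in 𝓝 x ⊓ ae μ, p (L y)) :
    ∀ᶠ z in 𝓝 (L x) ⊓ ae μ, p z := by
  set e := L.toContinuousLinearEquivOfDetNeZero hL
  have hdet : (e.symm : E →L[ℝ] E).det ≠ 0 := (LinearEquiv.isUnit_det' _).ne_zero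
  have hsymm : Tendsto e.symm (𝓝 (L x) ⊓ ae μ) (𝓝 x ⊓ ae μ) := by
    refine Tendsto.inf ?_ (Measure.ContinuousLinearMap.quasiMeasurePreserving μ _ hdet).tendsto_ae
    have hcont := e.symm.continuous.tendsto (e x)
    rwa [e.symm_apply_apply] at hcont
  filter_upwards [hsymm.eventually h] with z hz
  rwa [← e.apply_symm_apply z]

end LinearChange

/-- `hv` and `hw` say that `v` moves only the first rotated coordinate and `w` only the second,
so that the rotated coordinates map the parallelogram `p, p + v, p + w, p + v + w` onto a
rectangle with sides parallel to the axes. -/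
theorem mul_mul_eq_of_ae_eq_mul_rotated {M : Type*} [CommMonoid M] {σ : ℝ × ℝ → M}
    {f g : ℝ → M} {U : Set (ℝ × ℝ)} (hU : MeasurableSet U) {h₁ h₂ : ℝ}
    (hh : h₁ ^ 2 + h₂ ^ 2 ≠ 0)
    (hσ : ∀ᵐ y ∂volume.restrict U, σ y = f (h₁ * y.1 + h₂ * y.2) * g (h₁ * y.2 - h₂ * y.1))
    {p v w : ℝ × ℝ} (hv : h₁ * v.2 = h₂ * v.1) (hw : h₁ * w.1 + h₂ * w.2 = 0)
    {c₀₀ c₀₁ c₁₀ c₁₁ : M}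
    (h₀₀ : ∀ᶠ y in 𝓝 p, y ∈ U ∧ σ y = c₀₀) (h₁₀ : ∀ᶠ y in 𝓝 (p + v), y ∈ U ∧ σ y = c₁₀)
    (h₀₁ : ∀ᶠ y in 𝓝 (p + w), y ∈ U ∧ σ y = c₀₁)
    (h₁₁ : ∀ᶠ y in 𝓝 (p + v + w), y ∈ U ∧ σ y = c₁₁) :
    c₀₀ * c₁₁ = c₁₀ * c₀₁ := by
  set L := LinearMap.toContinuousLinearMap
    (Matrix.toLin (Module.Basis.finTwoProd ℝ) (Module.Basis.finTwoProd ℝ) !![h₁, h₂; -h₂, h₁])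
  have hL : ∀ y, L y = (h₁ * y.1 + h₂ * y.2, h₁ * y.2 - h₂ * y.1) := fun y => by
    simp only [L, LinearMap.coe_toContinuousLinearMap', Matrix.toLin_finTwoProd_apply, neg_mul,
      Prod.mk.injEq, true_and]
    ring
  have hdet : L.det ≠ 0 := by
    simpa [L, ContinuousLinearMap.det, LinearMap.det_toLin, Matrix.det_fin_two_of, ← sq] using hh
  have hloc : ∀ q c, (∀ᶠ y in 𝓝 q, y ∈ U ∧ σ y = c) →
      ∀ᶠ z in 𝓝 (L q) ⊓ ae (volume.prod volume), f z.1 * g z.2 = c := by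
    intro q c hq
    rw [← Measure.volume_eq_prod]
    refine L.eventually_nhds_inf_ae_of_comp hdet ?_
    filter_upwards [mem_inf_of_left hq, mem_inf_of_right ((ae_restrict_iff' hU).1 hσ)]
      with y ⟨hyU, hy⟩ hfy
    rw [hL, ← hy, hfy hyU]
  have hLv : L (p + v) = ((L (p + v)).1, (L p).2) :=
    Prod.ext rfl (by simp only [hL, Prod.snd_add, Prod.fst_add]; linear_combination hv)
  have hLw : L (p + w) = ((L p).1, (L (p + w)).2) :=
    Prod.ext (by simp only [hL, Prod.snd_add, Prod.fst_add]; linear_combination hw) rfl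
  have hLvw : L (p + v + w) = ((L (p + v)).1, (L (p + w)).2) := by
    simp only [hL, Prod.snd_add, Prod.fst_add, Prod.ext_iff]
    exact ⟨by linear_combination hw, by linear_combination hv⟩
  exact mul_mul_eq_of_eventually_nhds_inf_ae (hloc _ _ h₀₀) (hLw ▸ hloc _ _ h₀₁)
    (hLv ▸ hloc _ _ h₁₀) (hLvw ▸ hloc _ _ h₁₁)

theorem exists_pos_lt_abs_mul_lt (x y : ℝ) {δ : ℝ} (hδ : 0 < δ) :
    ∃ ε, 0 < ε ∧ ε < δ ∧ |ε * x| < δ ∧ |ε * y| < δ := by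
  have hsmall : ∀ a : ℝ, ∀ᶠ ε in 𝓝 (0 : ℝ), |ε * a| < δ := fun a =>
    ((continuous_id.mul continuous_const).abs.tendsto' 0 0 (by simp)).eventually_lt_const hδ
  obtain ⟨ε, ⟨hεδ, hx, hy⟩, hε⟩ :=
    (((eventually_lt_nhds hδ).and ((hsmall x).and (hsmall y))).filter_mono nhdsWithin_le_nhds
      |>.and (self_mem_nhdsWithin (s := Set.Ioi 0))).exists
  exact ⟨ε, hε, hεδ, hx, hy⟩

def unitSquare : Set (ℝ × ℝ) := Set.Ioo (-(1 : ℝ) / 2) (1 / 2) ×ˢ Set.Ioo (-(1 : ℝ) / 2) (1 / 2)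

theorem isOpen_unitSquare : IsOpen unitSquare := isOpen_Ioo.prod isOpen_Ioo

theorem eventually_pos_iff_of_ne_zero {x : ℝ} (hx : x ≠ 0) :
    ∀ᶠ x' in 𝓝 x, (0 < x' ↔ 0 < x) := by
  rcases hx.lt_or_gt with hx | hx
  · filter_upwards [gt_mem_nhds hx] with x' hx' using iff_of_false hx'.not_gt hx.not_gt
  · filter_upwards [lt_mem_nhds hx] with x' hx' using iff_of_true hx' hx

section Checkerboard

variable {α₁ α₂ α₃ α₄ : ℝ} {f g : ℝ → ℝ} {h₁ h₂ : ℝ}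

theorem checkerboard_of_pos_of_pos {y : ℝ × ℝ} (hy₁ : 0 < y.1) (hy₂ : 0 < y.2) :
    checkerboard α₁ α₂ α₃ α₄ y = α₁ := by
  simp [checkerboard, hy₁, hy₂]

theorem checkerboard_of_pos_of_neg {y : ℝ × ℝ} (hy₁ : 0 < y.1) (hy₂ : y.2 < 0) :
    checkerboard α₁ α₂ α₃ α₄ y = α₂ := by
  simp [checkerboard, hy₁, hy₂.not_gt]

theorem checkerboard_of_neg_of_neg {y : ℝ × ℝ} (hy₁ : y.1 < 0) (hy₂ : y.2 < 0) :
    checkerboard α₁ α₂ α₃ α₄ y = α₃ := by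
  simp [checkerboard, hy₁.not_gt, hy₂.not_gt]

theorem checkerboard_of_neg_of_pos {y : ℝ × ℝ} (hy₁ : y.1 < 0) (hy₂ : 0 < y.2) :
    checkerboard α₁ α₂ α₃ α₄ y = α₄ := by
  simp [checkerboard, hy₁.not_gt, hy₂]

theorem eventually_checkerboard_eq {y : ℝ × ℝ} (hy₁ : y.1 ≠ 0) (hy₂ : y.2 ≠ 0) :
    ∀ᶠ x in 𝓝 y, checkerboard α₁ α₂ α₃ α₄ x = checkerboard α₁ α₂ α₃ α₄ y := by
  filter_upwards [continuous_fst.continuousAt.eventually (eventually_pos_iff_of_ne_zero hy₁),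
    continuous_snd.continuousAt.eventually (eventually_pos_iff_of_ne_zero hy₂)] with x hx₁ hx₂
  simp only [checkerboard, hx₁, hx₂]

theorem checkerboard_mul_eq_of_parallelogram (hh : h₁ ^ 2 + h₂ ^ 2 ≠ 0)
    (hfact : ∀ᵐ y ∂volume.restrict unitSquare,
      checkerboard α₁ α₂ α₃ α₄ y = f (h₁ * y.1 + h₂ * y.2) * g (h₁ * y.2 - h₂ * y.1))
    {p v w : ℝ × ℝ} (hv : h₁ * v.2 = h₂ * v.1) (hw : h₁ * w.1 + h₂ * w.2 = 0)
    (hcorner : ∀ q ∈ ({p, p + v, p + w, p + v + w} : Set (ℝ × ℝ)),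
      q ∈ unitSquare ∧ q.1 ≠ 0 ∧ q.2 ≠ 0) :
    checkerboard α₁ α₂ α₃ α₄ p * checkerboard α₁ α₂ α₃ α₄ (p + v + w) =
      checkerboard α₁ α₂ α₃ α₄ (p + v) * checkerboard α₁ α₂ α₃ α₄ (p + w) := by
  have hloc : ∀ q ∈ ({p, p + v, p + w, p + v + w} : Set (ℝ × ℝ)),
      ∀ᶠ y in 𝓝 q, y ∈ unitSquare ∧ checkerboard α₁ α₂ α₃ α₄ y = checkerboard α₁ α₂ α₃ α₄ q :=
    fun q hq => have ⟨hqU, hq₁, hq₂⟩ := hcorner q hq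
      (isOpen_unitSquare.eventually_mem hqU).and (eventually_checkerboard_eq hq₁ hq₂)
  exact mul_mul_eq_of_ae_eq_mul_rotated isOpen_unitSquare.measurableSet hh hfact hv hw
    (hloc _ (by simp)) (hloc _ (by simp)) (hloc _ (by simp)) (hloc _ (by simp))

theorem alpha₁_eq_alpha₂_of_ae_eq_mul_rotated (hα₂ : α₂ ≠ 0) (hh₁ : h₁ ≠ 0) (hh₂ : h₂ ≠ 0)
    (hfact : ∀ᵐ y ∂volume.restrict unitSquare,
      checkerboard α₁ α₂ α₃ α₄ y = f (h₁ * y.1 + h₂ * y.2) * g (h₁ * y.2 - h₂ * y.1)) :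
    α₁ = α₂ := by
  obtain ⟨ε, hε, hε8, hk, hk'⟩ :=
    exists_pos_lt_abs_mul_lt (h₁ / h₂) (h₂ / h₁) (by norm_num : (0 : ℝ) < 1 / 8)
  rw [abs_lt] at hk hk'
  have key := checkerboard_mul_eq_of_parallelogram (by positivity) hfact
    (p := (1 / 4, -(3 * ε / 2))) (v := (ε * (h₁ / h₂), ε))
    (w := (-(ε * (h₂ / h₁)), ε)) (by field_simp) (by field_simp; ring) ?_
  · rw [checkerboard_of_pos_of_neg, checkerboard_of_pos_of_pos, checkerboard_of_pos_of_neg,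
      checkerboard_of_pos_of_neg] at key
    · exact mul_left_cancel₀ hα₂ key
    all_goals norm_num <;> linarith
  · simp only [Set.mem_insert_iff, Set.mem_singleton_iff, forall_eq_or_imp, forall_eq,
      Prod.mk_add_mk, unitSquare, Set.mem_prod, Set.mem_Ioo]
    refine ⟨?_, ?_, ?_, ?_⟩ <;> refine ⟨⟨⟨?_, ?_⟩, ?_, ?_⟩, ?_, ?_⟩ <;> linarith

theorem alpha₂_eq_alpha₃_of_ae_eq_mul_rotated (hα₃ : α₃ ≠ 0) (hh₁ : h₁ ≠ 0) (hh₂ : h₂ ≠ 0)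
    (hfact : ∀ᵐ y ∂volume.restrict unitSquare,
      checkerboard α₁ α₂ α₃ α₄ y = f (h₁ * y.1 + h₂ * y.2) * g (h₁ * y.2 - h₂ * y.1)) :
    α₂ = α₃ := by
  obtain ⟨ε, hε, hε8, hk, hk'⟩ :=
    exists_pos_lt_abs_mul_lt (h₁ / h₂) (h₂ / h₁) (by norm_num : (0 : ℝ) < 1 / 8)
  rw [abs_lt] at hk hk'
  have key := checkerboard_mul_eq_of_parallelogram (by positivity) hfact
    (p := (-(3 * ε / 2), -(1 / 4))) (v := (ε, ε * (h₂ / h₁)))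
    (w := (ε, -(ε * (h₁ / h₂)))) (by field_simp) (by field_simp; ring) ?_
  · rw [checkerboard_of_neg_of_neg, checkerboard_of_pos_of_neg, checkerboard_of_neg_of_neg,
      checkerboard_of_neg_of_neg] at key
    · exact mul_left_cancel₀ hα₃ key
    all_goals norm_num <;> linarith
  · simp only [Set.mem_insert_iff, Set.mem_singleton_iff, forall_eq_or_imp, forall_eq,
      Prod.mk_add_mk, unitSquare, Set.mem_prod, Set.mem_Ioo]
    refine ⟨?_, ?_, ?_, ?_⟩ <;> refine ⟨⟨⟨?_, ?_⟩, ?_, ?_⟩, ?_, ?_⟩ <;> linarith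

theorem alpha₃_eq_alpha₄_of_ae_eq_mul_rotated (hα₃ : α₃ ≠ 0) (hh₁ : h₁ ≠ 0) (hh₂ : h₂ ≠ 0)
    (hfact : ∀ᵐ y ∂volume.restrict unitSquare,
      checkerboard α₁ α₂ α₃ α₄ y = f (h₁ * y.1 + h₂ * y.2) * g (h₁ * y.2 - h₂ * y.1)) :
    α₃ = α₄ := by
  obtain ⟨ε, hε, hε8, hk, hk'⟩ :=
    exists_pos_lt_abs_mul_lt (h₁ / h₂) (h₂ / h₁) (by norm_num : (0 : ℝ) < 1 / 8)
  rw [abs_lt] at hk hk'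
  have key := checkerboard_mul_eq_of_parallelogram (by positivity) hfact
    (p := (-(1 / 4), -(3 * ε / 2))) (v := (ε * (h₁ / h₂), ε))
    (w := (-(ε * (h₂ / h₁)), ε)) (by field_simp) (by field_simp; ring) ?_
  · rw [checkerboard_of_neg_of_neg, checkerboard_of_neg_of_pos, checkerboard_of_neg_of_neg,
      checkerboard_of_neg_of_neg] at key
    · exact (mul_left_cancel₀ hα₃ key).symm
    all_goals norm_num <;> linarith
  · simp only [Set.mem_insert_iff, Set.mem_singleton_iff, forall_eq_or_imp, forall_eq,
      Prod.mk_add_mk, unitSquare, Set.mem_prod, Set.mem_Ioo]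
    refine ⟨?_, ?_, ?_, ?_⟩ <;> refine ⟨⟨⟨?_, ?_⟩, ?_, ?_⟩, ?_, ?_⟩ <;> linarith

end Checkerboard

theorem checkerboard_rotated_tensorProduct_constant_general (α₁ α₂ α₃ α₄ : ℝ)
    (hα₂ : 0 < α₂) (hα₃ : 0 < α₃)
    (h₁ h₂ : ℝ) (hh₁ : h₁ ≠ 0) (hh₂ : h₂ ≠ 0)
    (f g : ℝ → ℝ)
    (hfact : ∀ᵐ y ∂(volume.restrict
        (Set.Ioo (-(1 : ℝ) / 2) (1 / 2) ×ˢ Set.Ioo (-(1 : ℝ) / 2) (1 / 2))),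
      checkerboard α₁ α₂ α₃ α₄ y = f (h₁ * y.1 + h₂ * y.2) * g (h₁ * y.2 - h₂ * y.1)) :
    α₁ = α₂ ∧ α₂ = α₃ ∧ α₃ = α₄ :=
  ⟨alpha₁_eq_alpha₂_of_ae_eq_mul_rotated hα₂.ne' hh₁ hh₂ hfact,
    alpha₂_eq_alpha₃_of_ae_eq_mul_rotated hα₃.ne' hh₁ hh₂ hfact,
    alpha₃_eq_alpha₄_of_ae_eq_mul_rotated hα₃.ne' hh₁ hh₂ hfact⟩

/-- If the four-phase checkerboard conductivity factorizes as a tensor product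
in the rotated coordinates `z₁ = h₁y₁ + h₂y₂`, `z₂ = h₁y₂ − h₂y₁` with
`h₁, h₂ ≠ 0`, then all four phases coincide, i.e. the checkerboard is constant. -/
theorem checkerboard_rotated_tensorProduct_constant (α₁ α₂ α₃ α₄ : ℝ)
    (hα₁ : 0 < α₁) (hα₂ : 0 < α₂) (hα₃ : 0 < α₃) (hα₄ : 0 < α₄)
    (h₁ h₂ : ℝ) (hh₁ : h₁ ≠ 0) (hh₂ : h₂ ≠ 0)
    (f g : ℝ → ℝ) (hf : Measurable f) (hg : Measurable g)
    (hfact : ∀ᵐ y ∂(volume.restrict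
        (Set.Ioo (-(1 : ℝ) / 2) (1 / 2) ×ˢ Set.Ioo (-(1 : ℝ) / 2) (1 / 2))),
      checkerboard α₁ α₂ α₃ α₄ y = f (h₁ * y.1 + h₂ * y.2) * g (h₁ * y.2 - h₂ * y.1)) :
    α₁ = α₂ ∧ α₂ = α₃ ∧ α₃ = α₄ :=
  checkerboard_rotated_tensorProduct_constant_general α₁ α₂ α₃ α₄ hα₂ hα₃ h₁ h₂ hh₁ hh₂ f g hfact
end

section
/- Let α, β, δ > 0 and let f, g : (0,δ) → (0,∞) be measurable functions such that α ≤ f(x)·g(y) ≤ β for almost every (x,y) ∈ (0,δ)². Then there exist constants 0 < c ≤ C such that c ≤ f(x) ≤ C for almost every x ∈ (0,δ) and c ≤ g(y) ≤ C for almost every y ∈ (0,δ); in particular f, f⁻¹, g, g⁻¹ ∈ L^∞(0,δ). -/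
open MeasureTheory

/-- If `f, g : (0,δ) → (0,∞)` are measurable and `α ≤ f(x)g(y) ≤ β` for almost
every `(x,y) ∈ (0,δ)²`, then there are constants `0 < c ≤ C` bounding both `f`
and `g` almost everywhere on `(0,δ)`; in particular `f, f⁻¹, g, g⁻¹ ∈ L^∞(0,δ)`. -/
theorem tensorProduct_factors_bounded (α β δ : ℝ)
    (hα : 0 < α) (hβ : 0 < β) (hδ : 0 < δ)
    (f g : ℝ → ℝ) (hf : Measurable f) (hg : Measurable g)
    (hfpos : ∀ x ∈ Set.Ioo (0 : ℝ) δ, 0 < f x)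
    (hgpos : ∀ y ∈ Set.Ioo (0 : ℝ) δ, 0 < g y)
    (hbound : ∀ᵐ p ∂(volume.restrict (Set.Ioo (0 : ℝ) δ ×ˢ Set.Ioo (0 : ℝ) δ)),
      α ≤ f p.1 * g p.2 ∧ f p.1 * g p.2 ≤ β) :
    ∃ c C : ℝ, 0 < c ∧ c ≤ C ∧
      (∀ᵐ x ∂(volume.restrict (Set.Ioo (0 : ℝ) δ)), c ≤ f x ∧ f x ≤ C) ∧
      (∀ᵐ y ∂(volume.restrict (Set.Ioo (0 : ℝ) δ)), c ≤ g y ∧ g y ≤ C) := by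
  set I : Set ℝ := Set.Ioo (0 : ℝ) δ with hI
  set μ : Measure ℝ := volume.restrict I with hμ
  have hμne : μ ≠ 0 := by
    simp only [hμ, ne_eq, Measure.restrict_eq_zero]
    simp [hI, Real.volume_Ioo, hδ, ne_of_gt hδ]
  haveI : (ae μ).NeBot := ae_neBot.mpr hμne
  -- turn the product a.e. statement into an iterated one
  rw [Measure.volume_eq_prod ℝ ℝ, ← Measure.prod_restrict] at hbound
  have hiter : ∀ᵐ x ∂μ, ∀ᵐ y ∂μ, α ≤ f x * g y ∧ f x * g y ≤ β :=
    Measure.ae_ae_of_ae_prod hbound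
  -- pick a good x₀ ∈ I
  obtain ⟨x₀, hx₀I, hx₀⟩ :=
    ((ae_restrict_mem measurableSet_Ioo).and hiter).exists
  have hfx₀ : 0 < f x₀ := hfpos x₀ hx₀I
  -- bounds on g
  set cg : ℝ := α / f x₀ with hcg
  set Cg : ℝ := β / f x₀ with hCg
  have hcgpos : 0 < cg := div_pos hα hfx₀
  have hgb : ∀ᵐ y ∂μ, cg ≤ g y ∧ g y ≤ Cg := by
    filter_upwards [hx₀] with y hy
    constructor
    · rw [hcg, div_le_iff₀ hfx₀]; linarith [hy.1]
    · rw [hCg, le_div_iff₀ hfx₀]; linarith [hy.2]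
  obtain ⟨y₁, hy₁⟩ := hgb.exists
  have hcgCg : cg ≤ Cg := le_trans hy₁.1 hy₁.2
  -- bounds on f
  set cf : ℝ := α / Cg with hcf
  set Cf : ℝ := β / cg with hCf
  have hCgpos : 0 < Cg := lt_of_lt_of_le hcgpos hcgCg
  have hfb : ∀ᵐ x ∂μ, cf ≤ f x ∧ f x ≤ Cf := by
    have h2 : ∀ᵐ x ∂μ, ∃ y, (α ≤ f x * g y ∧ f x * g y ≤ β) ∧ cg ≤ g y ∧ g y ≤ Cg := by
      filter_upwards [hiter] with x hx
      exact (hx.and hgb).exists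
    filter_upwards [h2] with x hx
    obtain ⟨y, ⟨h1, h2⟩, h3, h4⟩ := hx
    have hgy : 0 < g y := lt_of_lt_of_le hcgpos h3
    constructor
    · rw [hcf, div_le_iff₀ hCgpos]
      calc α ≤ f x * g y := h1
        _ ≤ f x * Cg := by
            have hfx : 0 ≤ f x := le_of_lt (lt_of_lt_of_le (div_pos hα hCgpos)
              (by rw [div_le_iff₀ hCgpos] at *; nlinarith))
            nlinarith
    · rw [hCf, le_div_iff₀ hcgpos]
      calc f x * cg ≤ f x * g y := by
            have hfx : 0 ≤ f x := by
              by_contra h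
              push_neg at h
              nlinarith
            nlinarith
        _ ≤ β := h2
  refine ⟨min cf cg, max Cf Cg, lt_min (div_pos hα hCgpos) hcgpos, ?_, ?_, ?_⟩
  · calc min cf cg ≤ cg := min_le_right _ _
      _ ≤ Cg := hcgCg
      _ ≤ max Cf Cg := le_max_right _ _
  · filter_upwards [hfb] with x hx
    exact ⟨le_trans (min_le_left _ _) hx.1, le_trans hx.2 (le_max_left _ _)⟩
  · filter_upwards [hgb] with y hy
    exact ⟨le_trans (min_le_right _ _) hy.1, le_trans hy.2 (le_max_right _ _)⟩
end
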